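/- Let g₀ = -x² and g_{n+1} = -(1/(n+2)) (x² + ∑_{j=0}^{n} g_j g_{n-j}) for n ≥ 0, where x is a real parameter. Then |g_n(x)| ≤ max(1, |x|)^{2n+2} for all n ≥ 0. -/

import Mathlib

open Finset

/-! With `R = max(1, |x|)²`, strong induction gives `|g n| ≤ R^(n+1)`: each of the `n + 1` products
in the convolution sum is at most `R^(n+2)`, and so is `x² ≤ R`, so the bracket is at most
`(n + 2) R^(n+2)`, which the factor `1/(n+2)` cancels. -/

lemma abs_sum_range_mul_sub_le {a : ℕ → ℝ} {R : ℝ} {n : ℕ}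
    (ha : ∀ j ≤ n, |a j| ≤ R ^ (j + 1)) :
    |∑ j ∈ range (n + 1), a j * a (n - j)| ≤ (n + 1) * R ^ (n + 2) := by
  calc |∑ j ∈ range (n + 1), a j * a (n - j)|
      ≤ ∑ j ∈ range (n + 1), |a j * a (n - j)| := abs_sum_le_sum_abs _ _
    _ ≤ ∑ _j ∈ range (n + 1), R ^ (n + 2) := by
      refine sum_le_sum fun j hj => ?_
      have hjn : j ≤ n := Nat.lt_succ_iff.mp (mem_range.mp hj)
      calc |a j * a (n - j)| = |a j| * |a (n - j)| := abs_mul _ _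
        _ ≤ R ^ (j + 1) * R ^ (n - j + 1) :=
          mul_le_mul (ha j hjn) (ha (n - j) (Nat.sub_le n j)) (abs_nonneg _)
            ((abs_nonneg _).trans (ha j hjn))
        _ = R ^ (n + 2) := by rw [← pow_add]; congr 1; omega
    _ = (n + 1) * R ^ (n + 2) := by simp

lemma abs_neg_inv_mul_add_le {c s R : ℝ} {n : ℕ} (hR : 1 ≤ R) (hc : |c| ≤ R)
    (hs : |s| ≤ (n + 1) * R ^ (n + 2)) :
    |-(1 / ((n : ℝ) + 2)) * (c + s)| ≤ R ^ (n + 2) := by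
  have hn : (0 : ℝ) < n + 2 := by positivity
  have hRpow : R ≤ R ^ (n + 2) := le_self_pow₀ hR (by omega)
  rw [abs_mul, abs_neg, abs_of_pos (by positivity), one_div_mul_eq_div, div_le_iff₀ hn]
  calc |c + s| ≤ |c| + |s| := abs_add_le c s
    _ ≤ R ^ (n + 2) + (n + 1) * R ^ (n + 2) := add_le_add (hc.trans hRpow) hs
    _ = R ^ (n + 2) * (n + 2) := by ring

theorem abs_le_pow_of_riccati_rec {c R : ℝ} {g : ℕ → ℝ} (hR : 1 ≤ R) (hc : |c| ≤ R)
    (hg0 : |g 0| ≤ R)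
    (hrec : ∀ n : ℕ,
      g (n + 1) = -(1 / ((n : ℝ) + 2)) * (c + ∑ j ∈ range (n + 1), g j * g (n - j)))
    (n : ℕ) : |g n| ≤ R ^ (n + 1) := by
  induction n using Nat.strong_induction_on with
  | _ n ih =>
    match n with
    | 0 => simpa using hg0
    | n + 1 =>
      rw [hrec n]
      exact abs_neg_inv_mul_add_le hR hc
        (abs_sum_range_mul_sub_le fun j hj => ih j (Nat.lt_succ_of_le hj))

theorem g_seq_bound (x : ℝ) (g : ℕ → ℝ)
    (hg0 : g 0 = -x ^ 2)
    (hrec : ∀ n : ℕ,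
      g (n + 1) = -(1 / ((n : ℝ) + 2)) * (x ^ 2 + ∑ j ∈ Finset.range (n + 1), g j * g (n - j))) :
    ∀ n : ℕ, |g n| ≤ max 1 |x| ^ (2 * n + 2) := by
  intro n
  have hx2 : |x ^ 2| ≤ max 1 |x| ^ 2 := by
    rw [abs_pow]
    exact pow_le_pow_left₀ (abs_nonneg x) (le_max_right _ _) 2
  have hR : 1 ≤ max 1 |x| ^ 2 := one_le_pow₀ (le_max_left _ _)
  have hg0' : |g 0| ≤ max 1 |x| ^ 2 := by rwa [hg0, abs_neg]
  rw [show 2 * n + 2 = 2 * (n + 1) by ring, pow_mul]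
  exact abs_le_pow_of_riccati_rec hR hx2 hg0' hrec n
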